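/- arXiv:1803.03556 — 2 statements merged into one kernel-verified Lean document; each statement's English description precedes it below -/
import Mathlib

section
/- For any real α > 0, lim_{z → +∞} Γ(z+α)/(Γ(z) · z^α) = 1. -/
/-!
Log-convexity of `Γ` (Hölder's inequality for the Gamma integral), applied between `z` and
`z + 1` and between `z + α` and `z + α + 1`, gives Wendel's bounds
`(z / (z + α)) ^ (1 - α) ≤ Γ(z + α) / (Γ(z) z ^ α) ≤ 1` for `0 < α < 1`, so the ratio tends to
`1` by squeezing. The functional equation `Γ(s + 1) = s Γ(s)` multiplies the ratio by
`(z + α) / z → 1` when `α` is replaced by `α + 1`, which propagates the limit to every `α ≥ 0`.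
-/

open Filter Real Topology

noncomputable def gammaRatio (α z : ℝ) : ℝ := Gamma (z + α) / (Gamma z * z ^ α)

lemma tendsto_add_div_self_atTop (a : ℝ) : Tendsto (fun z : ℝ => (z + a) / z) atTop (𝓝 1) := by
  have h : Tendsto (fun z : ℝ => 1 + a / z) atTop (𝓝 (1 + 0)) :=
    tendsto_const_nhds.add (tendsto_const_nhds.div_atTop tendsto_id)
  rw [add_zero] at h
  refine h.congr' ?_
  filter_upwards [eventually_ne_atTop 0] with z hz
  field_simp

lemma Gamma_add_le_rpow_mul_Gamma {z α : ℝ} (hz : 0 < z) (hα₀ : 0 < α) (hα₁ : α < 1) :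
    Gamma (z + α) ≤ z ^ α * Gamma z := by
  have hΓ : 0 < Gamma z := Gamma_pos_of_pos hz
  have key := Gamma_mul_add_mul_le_rpow_Gamma_mul_rpow_Gamma (by linarith : 0 < z + 1) hz hα₀
    (by linarith : 0 < 1 - α) (by ring)
  calc Gamma (z + α) = Gamma (α * (z + 1) + (1 - α) * z) := by ring_nf
    _ ≤ Gamma (z + 1) ^ α * Gamma z ^ (1 - α) := key
    _ = z ^ α * Gamma z := by
      rw [Gamma_add_one hz.ne', mul_rpow hz.le hΓ.le, mul_assoc, ← rpow_add hΓ,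
        add_sub_cancel, rpow_one]

lemma mul_Gamma_le_rpow_mul_Gamma_add {z α : ℝ} (hz : 0 < z) (hα₀ : 0 < α) (hα₁ : α < 1) :
    z * Gamma z ≤ (z + α) ^ (1 - α) * Gamma (z + α) := by
  have hzα : 0 < z + α := by linarith
  have hΓ : 0 < Gamma (z + α) := Gamma_pos_of_pos hzα
  have key := Gamma_mul_add_mul_le_rpow_Gamma_mul_rpow_Gamma hzα (by linarith : 0 < z + α + 1)
    hα₀ (by linarith : 0 < 1 - α) (by ring)
  calc z * Gamma z = Gamma (α * (z + α) + (1 - α) * (z + α + 1)) := by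
        rw [← Gamma_add_one hz.ne']; ring_nf
    _ ≤ Gamma (z + α) ^ α * Gamma (z + α + 1) ^ (1 - α) := key
    _ = (z + α) ^ (1 - α) * Gamma (z + α) := by
      rw [Gamma_add_one hzα.ne', mul_rpow hzα.le hΓ.le, mul_left_comm, ← rpow_add hΓ,
        add_sub_cancel, rpow_one]

lemma gammaRatio_le_one {z α : ℝ} (hz : 0 < z) (hα₀ : 0 < α) (hα₁ : α < 1) :
    gammaRatio α z ≤ 1 := by
  rw [gammaRatio, div_le_one (by have := Gamma_pos_of_pos hz; positivity), mul_comm]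
  exact Gamma_add_le_rpow_mul_Gamma hz hα₀ hα₁

lemma div_add_rpow_le_gammaRatio {z α : ℝ} (hz : 0 < z) (hα₀ : 0 < α) (hα₁ : α < 1) :
    (z / (z + α)) ^ (1 - α) ≤ gammaRatio α z := by
  have hzα : 0 < z + α := by linarith
  have hΓ : 0 < Gamma z := Gamma_pos_of_pos hz
  rw [gammaRatio, div_rpow hz.le hzα.le, div_le_div_iff₀ (by positivity) (by positivity)]
  calc z ^ (1 - α) * (Gamma z * z ^ α) = z * Gamma z := by
        rw [mul_left_comm, mul_comm, ← rpow_add hz, sub_add_cancel, rpow_one]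
    _ ≤ (z + α) ^ (1 - α) * Gamma (z + α) := mul_Gamma_le_rpow_mul_Gamma_add hz hα₀ hα₁
    _ = Gamma (z + α) * (z + α) ^ (1 - α) := mul_comm _ _

lemma gammaRatio_zero {z : ℝ} (hz : 0 < z) : gammaRatio 0 z = 1 := by
  rw [gammaRatio, add_zero, rpow_zero, mul_one, div_self (Gamma_pos_of_pos hz).ne']

lemma gammaRatio_add_one {z α : ℝ} (hz : 0 < z) (hα : 0 ≤ α) :
    gammaRatio (α + 1) z = gammaRatio α z * ((z + α) / z) := by
  have hΓ : Gamma z ≠ 0 := (Gamma_pos_of_pos hz).ne'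
  rw [gammaRatio, gammaRatio, ← add_assoc, Gamma_add_one (by linarith), rpow_add_one hz.ne']
  field_simp

lemma tendsto_gammaRatio_of_lt_one {α : ℝ} (hα₀ : 0 ≤ α) (hα₁ : α < 1) :
    Tendsto (gammaRatio α) atTop (𝓝 1) := by
  rcases hα₀.eq_or_lt with rfl | hα₀
  · exact tendsto_const_nhds.congr' <| by
      filter_upwards [eventually_gt_atTop 0] with z hz using (gammaRatio_zero hz).symm
  have hlower : Tendsto (fun z : ℝ => (z / (z + α)) ^ (1 - α)) atTop (𝓝 1) := by
    have h := ((tendsto_add_div_self_atTop α).inv₀ one_ne_zero).rpow_const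
      (p := 1 - α) (Or.inl (by norm_num))
    simpa only [inv_div, inv_one, one_rpow] using h
  refine tendsto_of_tendsto_of_tendsto_of_le_of_le' hlower tendsto_const_nhds ?_ ?_
  · filter_upwards [eventually_gt_atTop 0] with z hz using div_add_rpow_le_gammaRatio hz hα₀ hα₁
  · filter_upwards [eventually_gt_atTop 0] with z hz using gammaRatio_le_one hz hα₀ hα₁

lemma tendsto_gammaRatio_add_one {α : ℝ} (hα : 0 ≤ α) (h : Tendsto (gammaRatio α) atTop (𝓝 1)) :
    Tendsto (gammaRatio (α + 1)) atTop (𝓝 1) := by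
  have h' := h.mul (tendsto_add_div_self_atTop α)
  rw [mul_one] at h'
  refine h'.congr' ?_
  filter_upwards [eventually_gt_atTop 0] with z hz using (gammaRatio_add_one hz hα).symm

lemma tendsto_gammaRatio {α : ℝ} (hα : 0 ≤ α) : Tendsto (gammaRatio α) atTop (𝓝 1) := by
  obtain ⟨n, hn⟩ := exists_nat_gt α
  induction n generalizing α with
  | zero => exact absurd hn (by simpa using hα)
  | succ n ih =>
    rcases lt_or_ge α 1 with hα₁ | hα₁
    · exact tendsto_gammaRatio_of_lt_one hα hα₁
    · have h := tendsto_gammaRatio_add_one (sub_nonneg.2 hα₁)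
        (ih (sub_nonneg.2 hα₁) (by push_cast at hn; linarith))
      rwa [sub_add_cancel] at h

theorem stmt_3 (α : ℝ) (hα : 0 < α) :
    Filter.Tendsto (fun z : ℝ => Real.Gamma (z + α) / (Real.Gamma z * z ^ α))
      Filter.atTop (nhds 1) :=
  tendsto_gammaRatio hα.le
end

section
/- For real s ∈ (0,1), ∫_{-1}^{1} (1-t²)^{(s-1)/2} |x-t|^{-s} dt = π/cos(sπ/2) for all x ∈ (-1,1). -/
open MeasureTheory Set Real


/-- Beta-type integrand is integrable on `Ioo 0 1` for exponents `> -1`. -/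
lemma integrableOn_beta {p q : ℝ} (hp : -1 < p) (hq : -1 < q) :
    IntegrableOn (fun u : ℝ => u ^ p * (1 - u) ^ q) (Ioo (0:ℝ) 1) := by
  have hmeas : Measurable fun u : ℝ => u ^ p * (1 - u) ^ q := by
    fun_prop
  have h1 : IntegrableOn (fun u : ℝ => u ^ p * (1 - u) ^ q) (Ioc (0:ℝ) 2⁻¹) := by
    have hint : IntegrableOn (fun u : ℝ => u ^ p) (Ioc (0:ℝ) 2⁻¹) := by
      have := intervalIntegral.intervalIntegrable_rpow' (a := (0:ℝ)) (b := 2⁻¹) hp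
      rwa [intervalIntegrable_iff, uIoc_of_le (by norm_num : (0:ℝ) ≤ 2⁻¹)] at this
    refine ((hint.const_mul ((2⁻¹ : ℝ) ^ q + 1)).mono' hmeas.aestronglyMeasurable ?_)
    refine (ae_restrict_iff' measurableSet_Ioc).2 (ae_of_all _ fun u hu => ?_)
    have hu0 : 0 < u := hu.1
    have hu1 : u ≤ 2⁻¹ := hu.2
    have h1u : (2:ℝ)⁻¹ ≤ 1 - u := by linarith
    have h1u' : (0:ℝ) < 1 - u := by linarith
    have hb : (1 - u) ^ q ≤ (2⁻¹ : ℝ) ^ q + 1 := by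
      rcases le_or_gt 0 q with h | h
      · have : (1 - u) ^ q ≤ (1:ℝ) ^ q := rpow_le_rpow h1u'.le (by linarith) h
        rw [one_rpow] at this
        have : (1 - u) ^ q ≤ 1 := this
        nlinarith [rpow_nonneg (by norm_num : (0:ℝ) ≤ 2⁻¹) q]
      · have : (1 - u) ^ q ≤ (2⁻¹ : ℝ) ^ q :=
          rpow_le_rpow_of_nonpos (by norm_num) h1u h.le
        linarith
    rw [norm_mul, norm_of_nonneg (rpow_nonneg hu0.le p), norm_of_nonneg (rpow_nonneg h1u'.le q)]
    calc u ^ p * (1 - u) ^ q ≤ u ^ p * ((2⁻¹ : ℝ) ^ q + 1) := by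
          apply mul_le_mul_of_nonneg_left hb (rpow_nonneg hu0.le p)
      _ = ((2⁻¹ : ℝ) ^ q + 1) * u ^ p := mul_comm _ _
  have h2 : IntegrableOn (fun u : ℝ => u ^ p * (1 - u) ^ q) (Ioc (2⁻¹:ℝ) 1) := by
    have hint : IntegrableOn (fun u : ℝ => (1 - u) ^ q) (Ioc (2⁻¹:ℝ) 1) := by
      have h0 := intervalIntegral.intervalIntegrable_rpow' (a := (0:ℝ)) (b := 2⁻¹) hq
      have := h0.comp_sub_left 1
      simp only [sub_zero] at this
      norm_num at this
      rw [intervalIntegrable_iff, uIoc_comm, uIoc_of_le (by norm_num : (1/2:ℝ) ≤ 1)] at this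
      simpa using this
    refine ((hint.const_mul ((2⁻¹ : ℝ) ^ p + 1)).mono' hmeas.aestronglyMeasurable ?_)
    refine (ae_restrict_iff' measurableSet_Ioc).2 (ae_of_all _ fun u hu => ?_)
    have hu0 : (2:ℝ)⁻¹ < u := hu.1
    have hu1 : u ≤ 1 := hu.2
    have h1u' : (0:ℝ) ≤ 1 - u := by linarith
    have hb : u ^ p ≤ (2⁻¹ : ℝ) ^ p + 1 := by
      rcases le_or_gt 0 p with h | h
      · have : u ^ p ≤ (1:ℝ) ^ p := rpow_le_rpow (by linarith) hu1 h
        rw [one_rpow] at this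
        nlinarith [rpow_nonneg (by norm_num : (0:ℝ) ≤ 2⁻¹) p]
      · have : u ^ p ≤ (2⁻¹ : ℝ) ^ p :=
          rpow_le_rpow_of_nonpos (by norm_num) hu0.le h.le
        linarith
    rw [norm_mul, norm_of_nonneg (rpow_nonneg (by linarith : (0:ℝ) ≤ u) p),
      norm_of_nonneg (rpow_nonneg h1u' q)]
    calc u ^ p * (1 - u) ^ q ≤ ((2⁻¹ : ℝ) ^ p + 1) * (1 - u) ^ q :=
          mul_le_mul_of_nonneg_right hb (rpow_nonneg h1u' q)
      _ = _ := rfl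
  exact (h1.union h2).mono_set (fun u hu => by
    rcases le_or_gt u 2⁻¹ with h | h
    · exact Or.inl ⟨hu.1, h⟩
    · exact Or.inr ⟨h, hu.2.le⟩)

lemma beta_value {b : ℝ} (hb0 : 0 < b) (hb1 : b < 1) :
    ∫ w in Ioo (0:ℝ) 1, w ^ (b - 1) * (1 - w) ^ (-b) = π / Real.sin (π * b) := by
  have hre1 : 0 < (Complex.ofReal b).re := by simpa using hb0
  have hre2 : 0 < (1 - (Complex.ofReal b)).re := by
    simp [Complex.sub_re]; linarith
  have h := Complex.Gamma_mul_Gamma_eq_betaIntegral hre1 hre2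
  rw [add_sub_cancel, Complex.Gamma_one, one_mul] at h
  have h2 : Complex.Gamma b * Complex.Gamma (1 - b) = (π : ℂ) / Complex.sin (π * b) :=
    Complex.Gamma_mul_Gamma_one_sub b
  have hbeta : Complex.betaIntegral b (1 - b) =
      ((∫ w in (0:ℝ)..1, w ^ (b - 1) * (1 - w) ^ (-b) : ℝ) : ℂ) := by
    rw [Complex.betaIntegral, ← intervalIntegral.integral_ofReal]
    refine intervalIntegral.integral_congr fun w hw => ?_
    rw [uIcc_of_le (by norm_num : (0:ℝ) ≤ 1)] at hw
    push_cast
    rw [Complex.ofReal_cpow hw.1, Complex.ofReal_cpow (by linarith [hw.2] : (0:ℝ) ≤ 1 - w)]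
    push_cast
    have he : (1:ℂ) - ↑b - 1 = -↑b := by ring
    rw [he]
  rw [hbeta, h2] at h
  have hsin : ((Real.sin (π * b) : ℝ) : ℂ) = Complex.sin ((π : ℂ) * b) := by
    norm_cast
  rw [← hsin, ← Complex.ofReal_div] at h
  have := Complex.ofReal_inj.1 h
  rw [intervalIntegral.integral_of_le (by norm_num : (0:ℝ) ≤ 1),
    integral_Ioc_eq_integral_Ioo] at this
  rw [← this]

lemma key_alg {A P D U : ℝ} (hA : 0 < A) (hP : 0 < P) (hD : 0 < D) (hU : 0 < U) (s : ℝ) :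
    P ^ (1:ℝ) / D ^ (2:ℝ) * ((A ^ ((s - 1) / 2) * P ^ ((s - 1) / 2) / D ^ ((2:ℝ) * ((s - 1) / 2)))
        / (U ^ s * P ^ s / D ^ s))
      = P ^ ((1 - s) / 2) * (A ^ ((s - 1) / 2) * U ^ (-s) / D ^ (1:ℝ)) := by
  simp only [Real.rpow_def_of_pos hA, Real.rpow_def_of_pos hP, Real.rpow_def_of_pos hD,
    Real.rpow_def_of_pos hU, div_eq_mul_inv, mul_inv, ← Real.exp_neg, ← Real.exp_add]
  rw [Real.exp_eq_exp]
  ring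

lemma subst_mobius1 (s x : ℝ) (hs₀ : 0 < s) (hs₁ : s < 1) (hx : x ∈ Set.Ioo (-1:ℝ) 1) :
    ∫ t in Ioo (-1:ℝ) 1, (1 - t ^ 2) ^ ((s - 1) / 2) / |x - t| ^ s
      = (1 - x ^ 2) ^ ((1 - s) / 2) *
        ∫ u in Ioo (-1:ℝ) 1, (1 - u ^ 2) ^ ((s - 1) / 2) * |u| ^ (-s) / (1 + x * u) := by
  obtain ⟨hx1, hx2⟩ := hx
  have hxabs : |x| < 1 := abs_lt.2 ⟨hx1, hx2⟩
  have hP0 : 0 < 1 - x ^ 2 := by nlinarith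
  set f : ℝ → ℝ := fun u => (u + x) / (1 + x * u) with hf
  have hD : ∀ u : ℝ, u ∈ Ioo (-1:ℝ) 1 → 0 < 1 + x * u := by
    intro u hu
    have : |x * u| < 1 := by
      rw [abs_mul]
      calc |x| * |u| ≤ 1 * |u| := by
            apply mul_le_mul_of_nonneg_right hxabs.le (abs_nonneg u)
        _ = |u| := one_mul _
        _ < 1 := abs_lt.2 ⟨hu.1, hu.2⟩
    linarith [abs_lt.1 this |>.1]
  have hmem : ∀ u ∈ Ioo (-1:ℝ) 1, f u ∈ Ioo (-1:ℝ) 1 := by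
    intro u hu
    have hd := hD u hu
    constructor
    · rw [lt_div_iff₀ hd]; nlinarith [hu.1, hu.2]
    · rw [div_lt_iff₀ hd]; nlinarith [hu.1, hu.2]
  have himg : f '' Ioo (-1:ℝ) 1 = Ioo (-1:ℝ) 1 := by
    apply Set.eq_of_subset_of_subset
    · rintro t ⟨u, hu, rfl⟩; exact hmem u hu
    · intro t ht
      refine ⟨(t - x) / (1 - x * t), ?_, ?_⟩
      · have hd : 0 < 1 - x * t := by
          have : |x * t| < 1 := by
            rw [abs_mul]
            calc |x| * |t| ≤ 1 * |t| := mul_le_mul_of_nonneg_right hxabs.le (abs_nonneg t)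
              _ = |t| := one_mul _
              _ < 1 := abs_lt.2 ⟨ht.1, ht.2⟩
          linarith [abs_lt.1 this |>.2]
        constructor
        · rw [lt_div_iff₀ hd]; nlinarith [ht.1, ht.2]
        · rw [div_lt_iff₀ hd]; nlinarith [ht.1, ht.2]
      · have hd : 0 < 1 - x * t := by
          have : |x * t| < 1 := by
            rw [abs_mul]
            calc |x| * |t| ≤ 1 * |t| := mul_le_mul_of_nonneg_right hxabs.le (abs_nonneg t)
              _ = |t| := one_mul _
              _ < 1 := abs_lt.2 ⟨ht.1, ht.2⟩
          linarith [abs_lt.1 this |>.2]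
        show ((t - x) / (1 - x * t) + x) / (1 + x * ((t - x) / (1 - x * t))) = t
        have h2 : 1 + x * ((t - x) / (1 - x * t)) = (1 - x ^ 2) / (1 - x * t) := by
          field_simp; ring
        rw [h2, div_div_eq_mul_div, div_eq_iff hP0.ne']
        have hd' : 1 - t * x ≠ 0 := by rw [mul_comm]; exact hd.ne'
        field_simp
        ring
  have hderiv : ∀ u ∈ Ioo (-1:ℝ) 1,
      HasDerivWithinAt f ((1 - x ^ 2) / (1 + x * u) ^ 2) (Ioo (-1:ℝ) 1) u := by
    intro u hu
    have hd := hD u hu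
    have h1 : HasDerivAt (fun u : ℝ => u + x) 1 u := (hasDerivAt_id u).add_const x
    have h2 : HasDerivAt (fun u : ℝ => 1 + x * u) x u := by
      simpa using (hasDerivAt_id u).const_mul x |>.const_add 1
    have := h1.div h2 hd.ne'
    apply HasDerivAt.hasDerivWithinAt
    refine this.congr_deriv ?_
    ring
  have hinj : Set.InjOn f (Ioo (-1:ℝ) 1) := by
    intro u hu v hv huv
    have hdu := hD u hu
    have hdv := hD v hv
    rw [hf] at huv
    have hdu' : 1 + u * x ≠ 0 := by rw [mul_comm]; exact hdu.ne'
    field_simp at huv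
    nlinarith [huv]
  conv_lhs => rw [← himg]
  rw [integral_image_eq_integral_abs_deriv_smul measurableSet_Ioo hderiv hinj,
    ← integral_const_mul]
  apply setIntegral_congr_fun measurableSet_Ioo
  intro u hu
  have hd := hD u hu
  have hA0 : 0 < 1 - u ^ 2 := by nlinarith [hu.1, hu.2]
  have hd' : 1 + u * x ≠ 0 := by rw [mul_comm]; exact hd.ne'
  have hfu2 : 1 - f u ^ 2 = (1 - u ^ 2) * (1 - x ^ 2) / (1 + x * u) ^ 2 := by
    rw [hf]; field_simp; ring
  have hxfu : |x - f u| = |u| * (1 - x ^ 2) / (1 + x * u) := by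
    have : x - f u = -(u * (1 - x ^ 2)) / (1 + x * u) := by rw [hf]; field_simp; ring
    rw [this, abs_div, abs_neg, abs_mul, abs_of_pos hP0, abs_of_pos hd]
  by_cases hu0 : u = 0
  · subst hu0
    simp only [smul_eq_mul]
    rw [hxfu]
    simp [Real.zero_rpow hs₀.ne', Real.zero_rpow (neg_ne_zero.2 hs₀.ne')]
  · have hU0 : 0 < |u| := abs_pos.2 hu0
    simp only [smul_eq_mul]
    rw [hfu2, hxfu]
    rw [abs_of_pos (by positivity : (0:ℝ) < (1 - x ^ 2) / (1 + x * u) ^ 2)]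
    rw [Real.div_rpow (by positivity) (by positivity),
        Real.div_rpow (by positivity) (by positivity),
        Real.mul_rpow hA0.le hP0.le, Real.mul_rpow hU0.le hP0.le]
    have hD2 : ((1 + x * u) ^ 2) ^ ((s - 1) / 2) = (1 + x * u) ^ ((2:ℝ) * ((s - 1) / 2)) := by
      rw [← Real.rpow_natCast (1 + x * u) 2, ← Real.rpow_mul hd.le]
      norm_num
    rw [hD2]
    have key := key_alg hA0 hP0 hd hU0 s
    rw [Real.rpow_one, Real.rpow_one] at key
    rw [show (1 + x * u) ^ ((2:ℝ)) = (1 + x * u) ^ 2 from by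
      rw [← Real.rpow_natCast (1 + x * u) 2]; norm_num] at key
    exact key

lemma int_I (s x : ℝ) (hs₀ : 0 < s) (hs₁ : s < 1) (hx : |x| < 1) :
    IntegrableOn (fun u : ℝ => (1 - u ^ 2) ^ ((s - 1) / 2) * |u| ^ (-s) / (1 - x * u))
      (Ioo (0:ℝ) 1) := by
  have hmeas : Measurable fun u : ℝ => (1 - u ^ 2) ^ ((s - 1) / 2) * |u| ^ (-s) / (1 - x * u) := by
    fun_prop
  have hbase := (integrableOn_beta (p := -s) (q := (s - 1) / 2)
    (by linarith) (by linarith)).const_mul (1 - |x|)⁻¹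
  refine hbase.mono' hmeas.aestronglyMeasurable ?_
  refine (ae_restrict_iff' measurableSet_Ioo).2 (ae_of_all _ fun u hu => ?_)
  obtain ⟨hu0, hu1⟩ := hu
  have hxu : 0 < 1 - x * u := by
    have h1 : x * u ≤ |x| * u := mul_le_mul_of_nonneg_right (le_abs_self x) hu0.le
    nlinarith
  have hxu' : 1 - |x| ≤ 1 - x * u := by
    have h1 : x * u ≤ |x| * u := mul_le_mul_of_nonneg_right (le_abs_self x) hu0.le
    nlinarith [abs_nonneg x]
  have hA : (0:ℝ) < 1 - u ^ 2 := by nlinarith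
  have h1u : (0:ℝ) < 1 - u := by linarith
  have hsplit : (1 - u ^ 2) ^ ((s - 1) / 2) ≤ (1 - u) ^ ((s - 1) / 2) := by
    have : (1 - u ^ 2 : ℝ) = (1 - u) * (1 + u) := by ring
    rw [this, Real.mul_rpow h1u.le (by linarith)]
    have h2 : (1 + u) ^ ((s - 1) / 2) ≤ 1 :=
      Real.rpow_le_one_of_one_le_of_nonpos (by linarith) (by linarith)
    nlinarith [Real.rpow_nonneg h1u.le ((s - 1) / 2),
      Real.rpow_nonneg (by linarith : (0:ℝ) ≤ 1 + u) ((s - 1) / 2)]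
  have habs : |u| = u := abs_of_pos hu0
  rw [norm_div, norm_mul, norm_of_nonneg (Real.rpow_nonneg hA.le _),
    norm_of_nonneg (Real.rpow_nonneg (abs_nonneg u) _), norm_of_nonneg hxu.le, habs]
  rw [div_eq_mul_inv]
  have hxinv : (1 - x * u)⁻¹ ≤ (1 - |x|)⁻¹ := by
    apply inv_anti₀ (by linarith [hx]) hxu'
  calc (1 - u ^ 2) ^ ((s - 1) / 2) * u ^ (-s) * (1 - x * u)⁻¹
      ≤ (1 - u) ^ ((s - 1) / 2) * u ^ (-s) * (1 - |x|)⁻¹ := by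
        apply mul_le_mul
        · exact mul_le_mul_of_nonneg_right hsplit (Real.rpow_nonneg hu0.le _)
        · exact hxinv
        · positivity
        · positivity
    _ = (1 - |x|)⁻¹ * (u ^ (-s) * (1 - u) ^ ((s - 1) / 2)) := by ring

lemma reflect_setup : (∀ u ∈ Ioo (0:ℝ) 1, HasDerivWithinAt (fun u : ℝ => -u) (-1) (Ioo (0:ℝ) 1) u)
    ∧ Set.InjOn (fun u : ℝ => -u) (Ioo (0:ℝ) 1)
    ∧ (fun u : ℝ => -u) '' Ioo (0:ℝ) 1 = Ioo (-1:ℝ) 0 := by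
  refine ⟨fun u _ => (hasDerivAt_neg u).hasDerivWithinAt, fun u _ v _ h => by simpa using h, ?_⟩
  ext v
  simp only [mem_image, mem_Ioo]
  constructor
  · rintro ⟨u, ⟨h1, h2⟩, rfl⟩; exact ⟨by linarith, by linarith⟩
  · rintro ⟨h1, h2⟩; exact ⟨-v, ⟨by linarith, by linarith⟩, by ring⟩

lemma reflect_integral (g : ℝ → ℝ) :
    ∫ u in Ioo (-1:ℝ) 0, g u = ∫ u in Ioo (0:ℝ) 1, g (-u) := by
  obtain ⟨hd, hinj, himg⟩ := reflect_setup
  rw [← himg, integral_image_eq_integral_abs_deriv_smul measurableSet_Ioo hd hinj]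
  simp

lemma reflect_integrable (g : ℝ → ℝ) :
    IntegrableOn g (Ioo (-1:ℝ) 0) ↔ IntegrableOn (fun u => g (-u)) (Ioo (0:ℝ) 1) := by
  obtain ⟨hd, hinj, himg⟩ := reflect_setup
  rw [← himg, integrableOn_image_iff_integrableOn_abs_deriv_smul measurableSet_Ioo hd hinj]
  simp

lemma sq_integral (g : ℝ → ℝ) :
    ∫ v in Ioo (0:ℝ) 1, g v = ∫ u in Ioo (0:ℝ) 1, 2 * u * g (u ^ 2) := by
  have hd : ∀ u ∈ Ioo (0:ℝ) 1, HasDerivWithinAt (fun u : ℝ => u ^ 2) (2 * u) (Ioo (0:ℝ) 1) u := by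
    intro u _
    simpa using (hasDerivAt_pow 2 u).hasDerivWithinAt
  have hinj : Set.InjOn (fun u : ℝ => u ^ 2) (Ioo (0:ℝ) 1) := by
    intro u hu v hv h
    simp only at h
    nlinarith [hu.1, hv.1]
  have himg : (fun u : ℝ => u ^ 2) '' Ioo (0:ℝ) 1 = Ioo (0:ℝ) 1 := by
    ext v
    simp only [mem_image, mem_Ioo]
    constructor
    · rintro ⟨u, ⟨h1, h2⟩, rfl⟩; exact ⟨by positivity, by nlinarith⟩
    · rintro ⟨h1, h2⟩
      exact ⟨Real.sqrt v, ⟨Real.sqrt_pos.2 h1, by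
        rw [show (1:ℝ) = Real.sqrt 1 from (Real.sqrt_one).symm]
        exact Real.sqrt_lt_sqrt h1.le h2⟩, Real.sq_sqrt h1.le⟩
  conv_lhs => rw [← himg]
  rw [integral_image_eq_integral_abs_deriv_smul measurableSet_Ioo hd hinj]
  apply setIntegral_congr_fun measurableSet_Ioo
  intro u hu
  simp only [smul_eq_mul]
  rw [abs_of_pos (by linarith [hu.1] : (0:ℝ) < 2 * u)]

lemma key_alg2 {W Z M D : ℝ} (hW : 0 < W) (hZ : 0 < Z) (hM : 0 < M) (hD : 0 < D) (b : ℝ) :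
    Z ^ (1:ℝ) / D ^ (2:ℝ) * (W ^ (b - 1) / D ^ (b - 1) * (Z ^ (-b) * M ^ (-b) / D ^ (-b))
        / (Z ^ (1:ℝ) / D ^ (1:ℝ)))
      = Z ^ (-b) * (W ^ (b - 1) * M ^ (-b)) := by
  simp only [Real.rpow_def_of_pos hW, Real.rpow_def_of_pos hZ, Real.rpow_def_of_pos hM,
    Real.rpow_def_of_pos hD, div_eq_mul_inv, mul_inv, ← Real.exp_neg, ← Real.exp_add]
  rw [Real.exp_eq_exp]
  ring

lemma subst_mobius2 (b z : ℝ) (hb0 : 0 < b) (hb1 : b < 1) (hz0 : 0 ≤ z) (hz1 : z < 1) :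
    ∫ v in Ioo (0:ℝ) 1, v ^ (b - 1) * (1 - v) ^ (-b) / (1 - z * v)
      = (1 - z) ^ (-b) * ∫ w in Ioo (0:ℝ) 1, w ^ (b - 1) * (1 - w) ^ (-b) := by
  set f : ℝ → ℝ := fun w => w / (1 - z + z * w) with hf
  have hzpos : 0 < 1 - z := by linarith
  have hD : ∀ w : ℝ, w ∈ Ioo (0:ℝ) 1 → 0 < 1 - z + z * w := by
    intro w hw
    nlinarith [hw.1, mul_nonneg hz0 hw.1.le]
  have hderiv : ∀ w ∈ Ioo (0:ℝ) 1,
      HasDerivWithinAt f ((1 - z) / (1 - z + z * w) ^ 2) (Ioo (0:ℝ) 1) w := by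
    intro w hw
    have hd := hD w hw
    have h1 : HasDerivAt (fun w : ℝ => w) 1 w := hasDerivAt_id w
    have h2 : HasDerivAt (fun w : ℝ => 1 - z + z * w) z w := by
      simpa using ((hasDerivAt_id w).const_mul z).const_add (1 - z)
    have := h1.div h2 hd.ne'
    apply HasDerivAt.hasDerivWithinAt
    refine this.congr_deriv ?_
    ring
  have hinj : Set.InjOn f (Ioo (0:ℝ) 1) := by
    intro u hu v hv huv
    have hdu := hD u hu
    have hdv := hD v hv
    rw [hf] at huv
    have hdu' : 1 - z + u * z ≠ 0 := by rw [mul_comm]; exact hdu.ne'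
    field_simp at huv
    nlinarith [huv]
  have himg : f '' Ioo (0:ℝ) 1 = Ioo (0:ℝ) 1 := by
    ext v
    simp only [mem_image, mem_Ioo]
    constructor
    · rintro ⟨w, hw, rfl⟩
      have hd := hD w hw
      constructor
      · exact div_pos hw.1 hd
      · rw [div_lt_one hd]; nlinarith [hw.1, hw.2]
    · rintro ⟨hv0, hv1⟩
      have hdz : 0 < 1 - z * v := by nlinarith [mul_nonneg hz0 hv0.le]
      refine ⟨(1 - z) * v / (1 - z * v), ⟨?_, ?_⟩, ?_⟩
      · positivity
      · rw [div_lt_one hdz]; nlinarith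
      · rw [hf]
        have h2 : 1 - z + z * ((1 - z) * v / (1 - z * v)) = (1 - z) / (1 - z * v) := by
          field_simp; ring
        show (1 - z) * v / (1 - z * v) / (1 - z + z * ((1 - z) * v / (1 - z * v))) = v
        rw [h2, div_div_eq_mul_div, div_eq_iff hzpos.ne']
        field_simp
  conv_lhs => rw [← himg]
  rw [integral_image_eq_integral_abs_deriv_smul measurableSet_Ioo hderiv hinj,
    ← integral_const_mul]
  apply setIntegral_congr_fun measurableSet_Ioo
  intro w hw
  have hd := hD w hw
  have hw0 := hw.1
  have hw1 := hw.2
  have hM0 : (0:ℝ) < 1 - w := by linarith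
  have hfv : f w = w / (1 - z + z * w) := rfl
  have h1 : 1 - f w = (1 - z) * (1 - w) / (1 - z + z * w) := by
    rw [hfv]; field_simp; ring
  have h2 : 1 - z * f w = (1 - z) / (1 - z + z * w) := by
    rw [hfv]; field_simp; ring
  simp only [smul_eq_mul]
  rw [abs_of_pos (by positivity : (0:ℝ) < (1 - z) / (1 - z + z * w) ^ 2)]
  rw [hfv, h1, h2]
  rw [Real.div_rpow hw0.le hd.le,
      Real.div_rpow (by positivity) hd.le,
      Real.mul_rpow hzpos.le hM0.le]
  have key := key_alg2 hw0 hzpos hM0 hd b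
  rw [Real.rpow_one, Real.rpow_one] at key
  rw [show (1 - z + z * w) ^ ((2:ℝ)) = (1 - z + z * w) ^ 2 from by
    rw [← Real.rpow_natCast (1 - z + z * w) 2]; norm_num] at key
  exact key

theorem stmt_17 (s : ℝ) (hs₀ : 0 < s) (hs₁ : s < 1) (x : ℝ) (hx : x ∈ Set.Ioo (-1 : ℝ) 1) :
    ∫ t in (-1 : ℝ)..1, (1 - t ^ 2) ^ ((s - 1) / 2) / |x - t| ^ s =
      Real.pi / Real.cos (s * Real.pi / 2) := by
  obtain ⟨hx1, hx2⟩ := hx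
  have hxabs : |x| < 1 := abs_lt.2 ⟨hx1, hx2⟩
  have hP0 : 0 < 1 - x ^ 2 := by nlinarith
  rw [intervalIntegral.integral_of_le (by norm_num : (-1:ℝ) ≤ 1), integral_Ioc_eq_integral_Ioo,
    subst_mobius1 s x hs₀ hs₁ ⟨hx1, hx2⟩]
  have hI2 : IntegrableOn
      (fun u : ℝ => (1 - u ^ 2) ^ ((s - 1) / 2) * |u| ^ (-s) / (1 - x * u)) (Ioo (0:ℝ) 1) :=
    int_I s x hs₀ hs₁ hxabs
  have hI1 : IntegrableOn
      (fun u : ℝ => (1 - u ^ 2) ^ ((s - 1) / 2) * |u| ^ (-s) / (1 + x * u)) (Ioo (0:ℝ) 1) := by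
    have := int_I s (-x) hs₀ hs₁ (by rwa [abs_neg])
    simpa [sub_neg_eq_add] using this
  have hrefl_eq : EqOn
      (fun u : ℝ => (1 - u ^ 2) ^ ((s - 1) / 2) * |u| ^ (-s) / (1 - x * u))
      (fun u : ℝ => (1 - (-u) ^ 2) ^ ((s - 1) / 2) * |(-u)| ^ (-s) / (1 + x * (-u)))
      (Ioo (0:ℝ) 1) := by
    intro u _
    simp only
    rw [show 1 - (-u) ^ 2 = 1 - u ^ 2 by ring, abs_neg, show 1 + x * (-u) = 1 - x * u by ring]
  have hI3 : IntegrableOn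
      (fun u : ℝ => (1 - u ^ 2) ^ ((s - 1) / 2) * |u| ^ (-s) / (1 + x * u)) (Ioo (-1:ℝ) 0) := by
    rw [reflect_integrable]
    exact (hI2.congr_fun hrefl_eq measurableSet_Ioo)
  have hae : (Ioo (-1:ℝ) 1 : Set ℝ) =ᵐ[(volume : Measure ℝ)] ((Ioo (-1:ℝ) 0 ∪ Ioo (0:ℝ) 1 : Set ℝ)) := by
    rw [MeasureTheory.ae_eq_set]
    constructor
    · refine measure_mono_null (fun u hu => ?_) (measure_singleton (0:ℝ))
      obtain ⟨⟨h1, h2⟩, h3⟩ := hu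
      simp only [mem_union, mem_Ioo, not_or, not_and_or, not_lt] at h3
      simp only [mem_singleton_iff]
      rcases lt_trichotomy u 0 with h | h | h
      · exfalso
        rcases h3.1 with h' | h' <;> linarith
      · exact h
      · exfalso
        rcases h3.2 with h' | h' <;> linarith
    · refine measure_mono_null (fun u hu => ?_) (measure_empty (μ := (volume : Measure ℝ)))
      obtain ⟨h1, h2⟩ := hu
      exfalso
      rcases h1 with ⟨h3, h4⟩ | ⟨h3, h4⟩ <;> exact h2 ⟨by linarith, by linarith⟩
  have hsplit : ∫ u in Ioo (-1:ℝ) 1, (1 - u ^ 2) ^ ((s - 1) / 2) * |u| ^ (-s) / (1 + x * u)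
      = (∫ u in Ioo (-1:ℝ) 0, (1 - u ^ 2) ^ ((s - 1) / 2) * |u| ^ (-s) / (1 + x * u))
        + ∫ u in Ioo (0:ℝ) 1, (1 - u ^ 2) ^ ((s - 1) / 2) * |u| ^ (-s) / (1 + x * u) := by
    rw [setIntegral_congr_set hae,
      setIntegral_union (by
        rw [Set.disjoint_left]
        rintro u ⟨_, h2⟩ ⟨h3, _⟩
        linarith) measurableSet_Ioo hI3 hI1]
  rw [hsplit, reflect_integral (fun u : ℝ => (1 - u ^ 2) ^ ((s - 1) / 2) * |u| ^ (-s) / (1 + x * u))]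
  have hIneg : IntegrableOn
      (fun u : ℝ => (1 - (-u) ^ 2) ^ ((s - 1) / 2) * |(-u)| ^ (-s) / (1 + x * (-u)))
      (Ioo (0:ℝ) 1) := hI2.congr_fun hrefl_eq measurableSet_Ioo
  rw [← integral_add hIneg hI1]
  have hcomb : ∫ u in Ioo (0:ℝ) 1,
        ((1 - (-u) ^ 2) ^ ((s - 1) / 2) * |(-u)| ^ (-s) / (1 + x * (-u))
          + (1 - u ^ 2) ^ ((s - 1) / 2) * |u| ^ (-s) / (1 + x * u))
      = ∫ v in Ioo (0:ℝ) 1,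
          v ^ ((1 - s) / 2 - 1) * (1 - v) ^ (-((1 - s) / 2)) / (1 - x ^ 2 * v) := by
    rw [sq_integral (fun v : ℝ => v ^ ((1 - s) / 2 - 1) * (1 - v) ^ (-((1 - s) / 2)) / (1 - x ^ 2 * v))]
    apply setIntegral_congr_fun measurableSet_Ioo
    intro u hu
    obtain ⟨hu0, hu1⟩ := hu
    simp only
    have hd1 : (0:ℝ) < 1 - x * u := by nlinarith [mul_le_mul_of_nonneg_right (le_abs_self x) hu0.le, abs_nonneg x]
    have hd2 : (0:ℝ) < 1 + x * u := by nlinarith [mul_le_mul_of_nonneg_right (neg_le_abs x) hu0.le, abs_nonneg x]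
    have hd3 : (0:ℝ) < 1 - x ^ 2 * u ^ 2 := by nlinarith
    have hA0 : (0:ℝ) < 1 - u ^ 2 := by nlinarith
    rw [show 1 - (-u) ^ 2 = 1 - u ^ 2 by ring, abs_neg, show 1 + x * (-u) = 1 - x * u by ring,
      abs_of_pos hu0]
    rw [show -((1 - s) / 2) = (s - 1) / 2 by ring]
    have hpow : ((u:ℝ) ^ 2) ^ ((1 - s) / 2 - 1) = u ^ (-s) * u⁻¹ := by
      rw [← Real.rpow_natCast u 2, ← Real.rpow_mul hu0.le]
      rw [show ((2:ℕ):ℝ) * ((1 - s) / 2 - 1) = -s + (-1) by push_cast; ring,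
        Real.rpow_add hu0, Real.rpow_neg_one]
    rw [hpow]
    have hne1 := hd1.ne'
    have hne2 := hd2.ne'
    have hne3 := hd3.ne'
    have hXne : (1 - u ^ 2 : ℝ) ^ ((s - 1) / 2) ≠ 0 := (Real.rpow_pos_of_pos hA0 _).ne'
    have hUne : (u:ℝ) ^ (-s) ≠ 0 := (Real.rpow_pos_of_pos hu0 _).ne'
    have hne1' : 1 - u * x ≠ 0 := by rw [mul_comm]; exact hne1
    have hne2' : 1 + u * x ≠ 0 := by rw [mul_comm]; exact hne2
    have hne3' : 1 - u ^ 2 * x ^ 2 ≠ 0 := by rw [mul_comm]; exact hne3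
    field_simp
    ring
  rw [hcomb]
  rw [subst_mobius2 ((1 - s) / 2) (x ^ 2) (by linarith) (by linarith) (sq_nonneg x) (by nlinarith),
    beta_value (by linarith) (by linarith)]
  rw [← mul_assoc, ← Real.rpow_add hP0, show (1 - s) / 2 + -((1 - s) / 2) = 0 by ring,
    Real.rpow_zero, one_mul, show π * ((1 - s) / 2) = π / 2 - s * π / 2 by ring,
    Real.sin_pi_div_two_sub]
end
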